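/- Let M, N be closed subspaces of a Hilbert space H. The sum M + N is closed if and only if the cosine of the Friedrichs angle c[M,N] is strictly less than 1. -/

import Mathlib

noncomputable section

open scoped InnerProductSpace ENNReal

variable {H K : Type*} [NormedAddCommGroup H] [InnerProductSpace ℂ H] [CompleteSpace H]
  [NormedAddCommGroup K] [InnerProductSpace ℂ K] [CompleteSpace K]

/-- Orthogonal projection onto (the closure of) a subspace, as an operator `H →L[ℂ] H`. -/
def sproj (M : Submodule ℂ H) : H →L[ℂ] H :=
  M.topologicalClosure.subtypeL ∘L Submodule.orthogonalProjectionOnto M.topologicalClosure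

/-- The reduced minimum modulus of a bounded operator. -/
def gammaRMM (T : H →L[ℂ] K) : ℝ :=
  sInf ((fun x => ‖T x‖) '' {x : H | x ∈ (LinearMap.ker (T : H →ₗ[ℂ] K))ᗮ ∧ ‖x‖ = 1})

/-- `M ⊖ N`. -/
def ominus (M N : Submodule ℂ H) : Submodule ℂ H := M ⊓ (M ⊓ N)ᗮ

open Classical in
/-- The cosine of the Friedrichs angle between two subspaces. -/
def angleCos (M N : Submodule ℂ H) : ℝ :=
  if M ≤ N ∨ N ≤ M then 0
  else sSup {r : ℝ | ∃ x ∈ ominus M N, ∃ y ∈ ominus N M,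
    ‖x‖ = 1 ∧ ‖y‖ = 1 ∧ r = ‖(inner ℂ x y : ℂ)‖}

/-- The sine of the Friedrichs angle. -/
def angleSin (M N : Submodule ℂ H) : ℝ := Real.sqrt (1 - angleCos M N ^ 2)

variable {I : Type*}

/-- `(w i, W i)` is a fusion frame (frame of subspaces) with bounds `A`, `B`. -/
def IsFusionFrameWith (w : I → ℝ) (W : I → Submodule ℂ H) (A B : ℝ) : Prop :=
  0 < A ∧ 0 < B ∧ (∀ i, IsClosed (W i : Set H)) ∧
    ∀ f : H, A * ‖f‖ ^ 2 ≤ ∑' i, w i ^ 2 * ‖sproj (W i) f‖ ^ 2 ∧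
      ∑' i, w i ^ 2 * ‖sproj (W i) f‖ ^ 2 ≤ B * ‖f‖ ^ 2

/-- `(w i, W i)` is a fusion frame for some bounds. -/
def IsFusionFrame (w : I → ℝ) (W : I → Submodule ℂ H) : Prop :=
  ∃ A B : ℝ, IsFusionFrameWith w W A B

/-- a family of mutually orthogonal closed subspaces with dense span. -/
def IsOBS (E : I → Submodule ℂ H) : Prop :=
  (∀ i, IsClosed (E i : Set H)) ∧
  (∀ i j, i ≠ j → ∀ x ∈ E i, ∀ y ∈ E j, (inner ℂ x y : ℂ) = 0) ∧
  (⨆ i, E i).topologicalClosure = ⊤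

/-- A minimal sequence of subspaces. -/
def IsMinimal (W : I → Submodule ℂ H) : Prop :=
  ∀ i, W i ⊓ (⨆ j ∈ {j : I | j ≠ i}, W j).topologicalClosure = ⊥

/-- The kernel of the synthesis operator of `(w i, W i)`, as a subspace of `⊕₂ W i`. -/
def synthesisKernel (w : I → ℝ) (W : I → Submodule ℂ H) :
    Submodule ℂ (lp (fun i => W i) 2) where
  carrier := {g | ∀ f : H, HasSum (fun i => (w i : ℂ) * (inner ℂ ((g i : H)) f : ℂ)) 0}
  zero_mem' := by
    intro f
    have : (fun i => (w i : ℂ) * (inner ℂ (((0 : lp (fun i => W i) 2) i : H)) f : ℂ)) =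
        fun _ => 0 := by
      funext i; simp [lp.coeFn_zero]
    rw [this]; exact hasSum_zero
  add_mem' := by
    intro a b ha hb f
    have h := (ha f).add (hb f)
    rw [add_zero] at h
    have he : (fun i => (w i : ℂ) * (inner ℂ (((a + b) i : H)) f : ℂ)) =
        fun i => (w i : ℂ) * (inner ℂ ((a i : H)) f : ℂ) +
          (w i : ℂ) * (inner ℂ ((b i : H)) f : ℂ) := by
      funext i
      have h2 : ((a + b) i : ↥(W i)) = a i + b i := by rw [lp.coeFn_add]; rfl
      rw [h2, Submodule.coe_add, inner_add_left]; ring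
    rw [he]; exact h
  smul_mem' := by
    intro c a ha f
    have h := (ha f).mul_left (starRingEnd ℂ c)
    rw [mul_zero] at h
    have he : (fun i => (w i : ℂ) * (inner ℂ (((c • a) i : H)) f : ℂ)) =
        fun i => (starRingEnd ℂ c) * ((w i : ℂ) * (inner ℂ ((a i : H)) f : ℂ)) := by
      funext i
      have h2 : ((c • a) i : ↥(W i)) = c • a i := by rw [lp.coeFn_smul]; rfl
      rw [h2, Submodule.coe_smul, inner_smul_left]; ring
    rw [he]; exact h

/-- The excess of a fusion frame. -/
def fusionExcess (w : I → ℝ) (W : I → Submodule ℂ H) : Cardinal :=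
  Module.rank ℂ (synthesisKernel w W)

/-! Put `J = M ⊓ N`. Splitting `M` and `N` orthogonally along the closed subspace `J` gives
`M ⊔ N = J ⊔ (M ⊖ N ⊔ N ⊖ M)` with the second summand inside `Jᗮ`, so `M ⊔ N` is closed exactly
when `U ⊔ V` is, where `U = M ⊖ N` and `V = N ⊖ M` are closed and meet only in `0`. Then
`(u, v) ↦ u + v` is injective on `U × V`, and by the open mapping theorem its range `U ⊔ V` is
closed iff it is bounded below. A bound `‖⟪x, y⟫‖ ≤ c ‖x‖ ‖y‖` with `c < 1` gives
`‖x + y‖² ≥ (1 - c) (‖x‖² + ‖y‖²)`. Conversely, for unit vectors `x ∈ U`, `y ∈ V` the vector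
`x - ⟪y, x⟫ y` has squared norm `1 - ‖⟪x, y⟫‖²`, and a lower bound `‖x‖ ≤ C ‖x + v‖` applied with
`v = -⟪y, x⟫ y` keeps `‖⟪x, y⟫‖` away from `1`. -/

theorem Real.sSup_lt_iff_exists_forall_le {S : Set ℝ} (hS : BddAbove S) {a : ℝ} (ha : 0 < a) :
    sSup S < a ↔ ∃ c < a, ∀ r ∈ S, r ≤ c :=
  ⟨fun h ↦ ⟨sSup S, h, fun _ hr ↦ le_csSup hS hr⟩, fun ⟨c, hc, h⟩ ↦
    (Real.sSup_le (fun r hr ↦ (h r hr).trans (le_max_left c 0)) (le_max_right c 0)).trans_lt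
      (max_lt hc ha)⟩

section InnerProductSpace

variable {𝕜 E : Type*} [RCLike 𝕜] [NormedAddCommGroup E] [InnerProductSpace 𝕜 E]

theorem norm_sub_inner_smul_sq {x y : E} (hy : ‖y‖ = 1) :
    ‖x - ⟪y, x⟫_𝕜 • y‖ ^ 2 = ‖x‖ ^ 2 - ‖⟪y, x⟫_𝕜‖ ^ 2 := by
  rw [norm_sub_sq (𝕜 := 𝕜), inner_smul_right, ← inner_conj_symm, RCLike.conj_mul, norm_smul,
    RCLike.norm_conj, hy]
  norm_cast
  ring

theorem one_sub_mul_le_norm_add_sq {x y : E} {c : ℝ} (hc : 0 ≤ c)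
    (h : ‖⟪x, y⟫_𝕜‖ ≤ c * (‖x‖ * ‖y‖)) :
    (1 - c) * (‖x‖ ^ 2 + ‖y‖ ^ 2) ≤ ‖x + y‖ ^ 2 := by
  have hre := (abs_le.1 ((RCLike.abs_re_le_norm ⟪x, y⟫_𝕜).trans h)).1
  rw [norm_add_sq (𝕜 := 𝕜)]
  nlinarith [sq_nonneg (‖x‖ - ‖y‖)]

namespace Submodule

variable {U V : Submodule 𝕜 E}

theorem isClosed_sup_iff_of_le_orthogonal [U.HasOrthogonalProjection] (hV : V ≤ Uᗮ) :
    IsClosed ((U ⊔ V : Submodule 𝕜 E) : Set E) ↔ IsClosed (V : Set E) := by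
  have hinf : (U ⊔ V) ⊓ Uᗮ = V := by
    rw [sup_comm, sup_inf_assoc_of_le U hV, inf_orthogonal_eq_bot, sup_bot_eq]
  have hpreimage : ((U ⊔ V : Submodule 𝕜 E) : Set E) = Uᗮ.starProjection ⁻¹' V := by
    ext x
    refine ⟨fun hx ↦ ?_, fun hx ↦ ?_⟩
    · obtain ⟨u, hu, v, hv, rfl⟩ := mem_sup.1 hx
      rw [Set.mem_preimage, map_add, (starProjection_apply_eq_zero_iff _).2
        (le_orthogonal_orthogonal U hu), starProjection_eq_self_iff.2 (hV hv), zero_add]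
      exact hv
    · rw [← starProjection_add_starProjection_orthogonal (K := U) x]
      exact add_mem_sup (coe_mem _) hx
  refine ⟨fun h ↦ hinf ▸ h.inter U.isClosed_orthogonal, fun h ↦ ?_⟩
  rw [hpreimage]
  exact h.preimage (ContinuousLinearMap.continuous _)

theorem norm_inner_le_mul_of_forall_norm_eq_one {c : ℝ}
    (h : ∀ x ∈ U, ∀ y ∈ V, ‖x‖ = 1 → ‖y‖ = 1 → ‖⟪x, y⟫_𝕜‖ ≤ c) {x y : E} (hx : x ∈ U)
    (hy : y ∈ V) : ‖⟪x, y⟫_𝕜‖ ≤ c * (‖x‖ * ‖y‖) := by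
  rcases eq_or_ne x 0 with rfl | hx0
  · simp
  rcases eq_or_ne y 0 with rfl | hy0
  · simp
  have := h _ (U.smul_mem (‖x‖⁻¹ : 𝕜) hx) _ (V.smul_mem (‖y‖⁻¹ : 𝕜) hy)
    (norm_smul_inv_norm hx0) (norm_smul_inv_norm hy0)
  rw [inner_smul_left, inner_smul_right, norm_mul, norm_mul, RCLike.norm_conj, norm_inv, norm_inv,
    RCLike.norm_ofReal, RCLike.norm_ofReal, abs_norm, abs_norm, inv_mul_le_iff₀ (by positivity),
    inv_mul_le_iff₀ (by positivity)] at this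
  linarith

theorem range_subtypeL_coprod_subtypeL :
    Set.range (U.subtypeL.coprod V.subtypeL) = ((U ⊔ V : Submodule 𝕜 E) : Set E) := by
  ext z
  simp [mem_sup, eq_comm]

theorem isClosed_sup_of_norm_inner_le [CompleteSpace U] [CompleteSpace V] {c : ℝ} (hc₀ : 0 ≤ c)
    (hc₁ : c < 1) (h : ∀ x ∈ U, ∀ y ∈ V, ‖⟪x, y⟫_𝕜‖ ≤ c * (‖x‖ * ‖y‖)) :
    IsClosed ((U ⊔ V : Submodule 𝕜 E) : Set E) := by
  have hbound (p : U × V) : ‖p‖ ≤ √(1 - c)⁻¹ * ‖U.subtypeL.coprod V.subtypeL p‖ := by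
    obtain ⟨⟨x, hx⟩, ⟨y, hy⟩⟩ := p
    have hsum := one_sub_mul_le_norm_add_sq hc₀ (h x hx y hy)
    have hprod : ‖((⟨x, hx⟩, ⟨y, hy⟩) : U × V)‖ ^ 2 ≤ ‖x‖ ^ 2 + ‖y‖ ^ 2 := by
      rw [Prod.norm_def]
      rcases max_cases ‖(⟨x, hx⟩ : U)‖ ‖(⟨y, hy⟩ : V)‖ with ⟨hmax, -⟩ | ⟨hmax, -⟩ <;>
        rw [hmax] <;> simp
    rw [← Real.sqrt_sq (norm_nonneg _), ← Real.sqrt_sq (norm_nonneg (_ : E)), ← Real.sqrt_mul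
      (by linarith [inv_pos.2 (sub_pos.2 hc₁)])]
    refine Real.sqrt_le_sqrt (hprod.trans ?_)
    rw [le_inv_mul_iff₀ (sub_pos.2 hc₁)]
    simpa using hsum
  rw [← range_subtypeL_coprod_subtypeL]
  exact ((U.subtypeL.coprod V.subtypeL).antilipschitz_of_bound
    (K := ⟨√(1 - c)⁻¹, Real.sqrt_nonneg _⟩) hbound).isClosed_range
    (ContinuousLinearMap.uniformContinuous _)

theorem exists_norm_inner_le_of_norm_le_mul_norm_add {C : ℝ}
    (hC : ∀ x ∈ U, ∀ y ∈ V, ‖x‖ ≤ C * ‖x + y‖) :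
    ∃ c < 1, ∀ x ∈ U, ∀ y ∈ V, ‖x‖ = 1 → ‖y‖ = 1 → ‖⟪x, y⟫_𝕜‖ ≤ c := by
  refine ⟨1 - (2 * (1 + C ^ 2))⁻¹, by simp only [sub_lt_self_iff]; positivity, ?_⟩
  intro x hx y hy hx₁ hy₁
  have h := hC x hx _ (V.neg_mem (V.smul_mem ⟪y, x⟫_𝕜 hy))
  rw [← sub_eq_add_neg, hx₁] at h
  have hsq := norm_sub_inner_smul_sq (𝕜 := 𝕜) (x := x) hy₁
  rw [hx₁, norm_inner_symm] at hsq
  have hle : ‖⟪x, y⟫_𝕜‖ ≤ 1 := by simpa [hx₁, hy₁] using norm_inner_le_norm (𝕜 := 𝕜) x y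
  have hkey : 1 ≤ (1 + C ^ 2) * (1 - ‖⟪x, y⟫_𝕜‖ ^ 2) := by
    nlinarith [sq_nonneg C, norm_nonneg (x - ⟪y, x⟫_𝕜 • y)]
  rw [le_sub_comm, inv_le_iff_one_le_mul₀' (by positivity)]
  nlinarith [mul_nonneg (by positivity : (0 : ℝ) ≤ 1 + C ^ 2) (sub_nonneg.2 hle)]

theorem exists_norm_inner_le_of_isClosed_sup [CompleteSpace E] [CompleteSpace U]
    [CompleteSpace V] (hUV : Disjoint U V) (h : IsClosed ((U ⊔ V : Submodule 𝕜 E) : Set E)) :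
    ∃ c < 1, ∀ x ∈ U, ∀ y ∈ V, ‖x‖ = 1 → ‖y‖ = 1 → ‖⟪x, y⟫_𝕜‖ ≤ c := by
  have hinj : Function.Injective (U.subtypeL.coprod V.subtypeL) := by
    refine (injective_iff_map_eq_zero _).2 fun ⟨⟨x, hx⟩, ⟨y, hy⟩⟩ hxy ↦ ?_
    replace hxy : x + y = 0 := hxy
    have hx₀ : x = 0 := disjoint_def.1 hUV x hx (eq_neg_of_add_eq_zero_left hxy ▸ V.neg_mem hy)
    subst hx₀
    simp_all
  obtain ⟨C, hC⟩ := (U.subtypeL.coprod V.subtypeL).antilipschitz_of_injective_of_isClosed_range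
    hinj (by rwa [range_subtypeL_coprod_subtypeL])
  refine exists_norm_inner_le_of_norm_le_mul_norm_add (C := C) fun x hx y hy ↦ ?_
  exact (norm_fst_le ((⟨x, hx⟩, ⟨y, hy⟩) : U × V)).trans
    (ZeroHomClass.bound_of_antilipschitz _ hC _)

theorem isClosed_sup_iff_exists_norm_inner_le [CompleteSpace E] (hU : IsClosed (U : Set E))
    (hV : IsClosed (V : Set E)) (hUV : Disjoint U V) :
    IsClosed ((U ⊔ V : Submodule 𝕜 E) : Set E) ↔
      ∃ c < 1, ∀ x ∈ U, ∀ y ∈ V, ‖x‖ = 1 → ‖y‖ = 1 → ‖⟪x, y⟫_𝕜‖ ≤ c := by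
  have := hU.completeSpace_coe
  have := hV.completeSpace_coe
  refine ⟨exists_norm_inner_le_of_isClosed_sup hUV, fun ⟨c, hc₁, h⟩ ↦ ?_⟩
  refine isClosed_sup_of_norm_inner_le (le_max_right c 0) (max_lt hc₁ one_pos) fun x hx y hy ↦ ?_
  exact norm_inner_le_mul_of_forall_norm_eq_one
    (fun x hx y hy hx₁ hy₁ ↦ (h x hx y hy hx₁ hy₁).trans (le_max_left c 0)) hx hy

theorem isClosed_sup_iff_sSup_norm_inner_lt_one [CompleteSpace E] (hU : IsClosed (U : Set E))
    (hV : IsClosed (V : Set E)) (hUV : Disjoint U V) :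
    IsClosed ((U ⊔ V : Submodule 𝕜 E) : Set E) ↔
      sSup {r : ℝ | ∃ x ∈ U, ∃ y ∈ V, ‖x‖ = 1 ∧ ‖y‖ = 1 ∧ r = ‖⟪x, y⟫_𝕜‖} < 1 := by
  rw [Real.sSup_lt_iff_exists_forall_le ⟨1, ?bdd⟩ one_pos,
    isClosed_sup_iff_exists_norm_inner_le hU hV hUV]
  · simp only [Set.mem_ofPred_eq, forall_exists_index, and_imp]
    exact exists_congr fun c ↦ and_congr_right fun _ ↦
      ⟨fun h _ x hx y hy hx₁ hy₁ hr ↦ hr ▸ h x hx y hy hx₁ hy₁,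
        fun h x hx y hy hx₁ hy₁ ↦ h _ x hx y hy hx₁ hy₁ rfl⟩
  case bdd =>
    rintro _ ⟨x, -, y, -, hx₁, hy₁, rfl⟩
    simpa [hx₁, hy₁] using norm_inner_le_norm (𝕜 := 𝕜) x y

end Submodule

end InnerProductSpace

section ominus

variable {E : Type*} [NormedAddCommGroup E] [InnerProductSpace ℂ E] {M N : Submodule ℂ E}

theorem isClosed_ominus (hM : IsClosed (M : Set E)) : IsClosed (ominus M N : Set E) :=
  hM.inter (M ⊓ N).isClosed_orthogonal

theorem disjoint_ominus : Disjoint (ominus M N) (ominus N M) := by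
  rw [disjoint_iff_inf_le, ← (M ⊓ N).inf_orthogonal_eq_bot]
  exact le_inf (le_inf (inf_le_left.trans inf_le_left) (inf_le_right.trans inf_le_left))
    (inf_le_left.trans inf_le_right)

theorem inf_sup_ominus [(M ⊓ N).HasOrthogonalProjection] : M ⊓ N ⊔ ominus M N = M := by
  rw [ominus, inf_comm M (M ⊓ N)ᗮ]
  exact Submodule.sup_orthogonal_inf_of_hasOrthogonalProjection inf_le_left

theorem isClosed_sup_iff_isClosed_ominus_sup_ominus [CompleteSpace E] (hM : IsClosed (M : Set E))
    (hN : IsClosed (N : Set E)) :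
    IsClosed ((M ⊔ N : Submodule ℂ E) : Set E) ↔
      IsClosed ((ominus M N ⊔ ominus N M : Submodule ℂ E) : Set E) := by
  have : CompleteSpace (M ⊓ N : Submodule ℂ E) := (hM.inter hN).completeSpace_coe
  have : CompleteSpace (N ⊓ M : Submodule ℂ E) := (hN.inter hM).completeSpace_coe
  have hsup : M ⊔ N = M ⊓ N ⊔ (ominus M N ⊔ ominus N M) := by
    calc M ⊔ N = (M ⊓ N ⊔ ominus M N) ⊔ (N ⊓ M ⊔ ominus N M) := by
          rw [inf_sup_ominus, inf_sup_ominus]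
      _ = M ⊓ N ⊔ (ominus M N ⊔ ominus N M) := by rw [inf_comm N M, sup_sup_sup_comm, sup_idem]
  rw [hsup]
  exact Submodule.isClosed_sup_iff_of_le_orthogonal
    (sup_le inf_le_right (inf_comm N M ▸ inf_le_right))

end ominus

theorem isClosed_sup_iff_angleCos_lt_one (M N : Submodule ℂ H)
    (hM : IsClosed (M : Set H)) (hN : IsClosed (N : Set H)) :
    IsClosed ((M ⊔ N : Submodule ℂ H) : Set H) ↔ angleCos M N < 1 := by
  rw [angleCos]
  split_ifs with hnested
  · simp only [zero_lt_one, iff_true]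
    rcases hnested with h | h
    · rwa [sup_eq_right.2 h]
    · rwa [sup_eq_left.2 h]
  · rw [isClosed_sup_iff_isClosed_ominus_sup_ominus hM hN]
    exact Submodule.isClosed_sup_iff_sSup_norm_inner_lt_one (isClosed_ominus hM)
      (isClosed_ominus hN) disjoint_ominus

end
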